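/- Let ρ: D → ℝ be C¹ with ρ(0) = 0, and suppose there exist points x₀ arbitrarily close to 0 with ρ(x₀) > 0. Let U = {x ∈ B : ρ(x) > 0} where B is a closed ball around 0 contained in D. Let f: D → ℝⁿ be C¹ with f(0) = 0. If div(ρ·f)(x) > ρ(x)·div f(x) for all x ∈ U, then the equilibrium x = 0 of ẋ = f(x) is unstable. -/

import Mathlib

/-!
Chetaev's argument. Since `div (ρ f) = ρ div f + Dρ · f`, the hypothesis says that `ρ` increases
along the flow, `Dρ(x) (f x) > 0`, at every point of the ball where `ρ > 0`. Starting from `x₀` near `0`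
with `ρ x₀ > 0`, a trajectory that stays in the ball keeps `ρ ≥ ρ x₀ / 2`; on that compact region
`Dρ · f` is bounded below by some `c > 0`, so `ρ` grows at least like `ρ x₀ + c t`, which is
impossible for long since `ρ` is bounded on the ball. Hence the trajectory reaches the sphere of
radius `r`. To have trajectories that exist for as long as needed, `f` is replaced by
`f ∘ (radial retraction onto the ball)`, which is bounded and globally Lipschitz and agrees with
`f` on the ball.
-/

open scoped BigOperators RealInnerProductSpace Topology
open Metric

/-- Divergence of a vector field on ℝⁿ. -/
noncomputable def vdiv {n : ℕ} (f : EuclideanSpace ℝ (Fin n) → EuclideanSpace ℝ (Fin n))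
    (x : EuclideanSpace ℝ (Fin n)) : ℝ :=
  ∑ i, fderiv ℝ f x (EuclideanSpace.single i (1:ℝ)) i

open Set
open scoped NNReal

lemma EuclideanSpace.sum_smul_single {n : ℕ} (v : EuclideanSpace ℝ (Fin n)) :
    ∑ i, v i • EuclideanSpace.single i (1:ℝ) = v := by
  simpa [EuclideanSpace.basisFun_apply, EuclideanSpace.basisFun_repr] using
    (EuclideanSpace.basisFun (Fin n) ℝ).sum_repr v

lemma vdiv_smul {n : ℕ} {ρ : EuclideanSpace ℝ (Fin n) → ℝ}
    {f : EuclideanSpace ℝ (Fin n) → EuclideanSpace ℝ (Fin n)} {x : EuclideanSpace ℝ (Fin n)}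
    (hρ : DifferentiableAt ℝ ρ x) (hf : DifferentiableAt ℝ f x) :
    vdiv (fun y => ρ y • f y) x = ρ x * vdiv f x + fderiv ℝ ρ x (f x) := by
  have hρf : fderiv ℝ ρ x (f x) = ∑ i, f x i * fderiv ℝ ρ x (EuclideanSpace.single i (1:ℝ)) := by
    conv_lhs => rw [← EuclideanSpace.sum_smul_single (f x)]
    simp [map_sum, smul_eq_mul]
  rw [vdiv, vdiv, fderiv_fun_smul hρ hf, hρf, Finset.mul_sum, ← Finset.sum_add_distrib]
  congr 1 with i
  simp only [add_apply, FunLike.coe_smul, Pi.smul_apply,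
    ContinuousLinearMap.smulRight_apply, PiLp.add_apply, PiLp.smul_apply, smul_eq_mul]
  ring

lemma lt_vdiv_smul_iff {n : ℕ} {ρ : EuclideanSpace ℝ (Fin n) → ℝ}
    {f : EuclideanSpace ℝ (Fin n) → EuclideanSpace ℝ (Fin n)} {x : EuclideanSpace ℝ (Fin n)}
    (hρ : DifferentiableAt ℝ ρ x) (hf : DifferentiableAt ℝ f x) :
    ρ x * vdiv f x < vdiv (fun y => ρ y • f y) x ↔ 0 < fderiv ℝ ρ x (f x) := by
  rw [vdiv_smul hρ hf, lt_add_iff_pos_right]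

section BallRetraction

variable {E : Type*} [NormedAddCommGroup E] [NormedSpace ℝ E] {r : ℝ}

noncomputable def ballRetraction (r : ℝ) (x : E) : E :=
  (r / max r ‖x‖) • x

lemma ballRetraction_of_mem (hr : 0 < r) {x : E} (hx : x ∈ closedBall (0 : E) r) :
    ballRetraction r x = x := by
  rw [mem_closedBall_zero_iff] at hx
  rw [ballRetraction, max_eq_left hx, div_self hr.ne', one_smul]

lemma ballRetraction_mem_closedBall (hr : 0 < r) (x : E) :
    ballRetraction r x ∈ closedBall (0 : E) r := by
  have hmax : 0 < max r ‖x‖ := lt_max_of_lt_left hr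
  rw [mem_closedBall_zero_iff, ballRetraction, norm_smul, Real.norm_of_nonneg (by positivity),
    div_mul_eq_mul_div, div_le_iff₀ hmax]
  exact mul_le_mul_of_nonneg_left (le_max_right _ _) hr.le

lemma lipschitzWith_ballRetraction (hr : 0 < r) : LipschitzWith 2 (ballRetraction (E := E) r) := by
  refine LipschitzWith.of_dist_le_mul fun x y => ?_
  set a := max r ‖x‖
  set b := max r ‖y‖
  have ha : 0 < a := lt_max_of_lt_left hr
  have hb : 0 < b := lt_max_of_lt_left hr
  have hab : |b - a| ≤ ‖x - y‖ := by
    calc |b - a| ≤ |‖y‖ - ‖x‖| := by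
          simpa only [b, a, max_comm r] using abs_max_sub_max_le_abs ‖y‖ ‖x‖ r
      _ ≤ ‖y - x‖ := abs_norm_sub_norm_le y x
      _ = ‖x - y‖ := norm_sub_rev y x
  have hsplit : ballRetraction r x - ballRetraction r y
      = (r / a) • (x - y) + ((r / a) * ((b - a) / b)) • y := by
    simp only [ballRetraction, smul_sub, a, b]
    rw [sub_add_eq_add_sub, sub_eq_sub_iff_add_eq_add, add_assoc, ← add_smul]
    congr 2
    field_simp
    ring
  have hra : r / a ≤ 1 := (div_le_one ha).2 (le_max_left _ _)
  have hyb : ‖y‖ / b ≤ 1 := (div_le_one hb).2 (le_max_right _ _)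
  rw [dist_eq_norm, dist_eq_norm, hsplit, NNReal.coe_two, two_mul]
  refine (norm_add_le _ _).trans (add_le_add ?_ ?_)
  · rw [norm_smul, Real.norm_of_nonneg (by positivity)]
    exact mul_le_of_le_one_left (norm_nonneg _) hra
  · calc ‖((r / a) * ((b - a) / b)) • y‖ = (r / a) * |b - a| * (‖y‖ / b) := by
          rw [norm_smul, Real.norm_eq_abs, abs_mul, abs_div, abs_div, abs_of_pos hr, abs_of_pos ha,
            abs_of_pos hb]
          ring
      _ ≤ 1 * ‖x - y‖ * 1 := by gcongr
      _ = ‖x - y‖ := by ring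

end BallRetraction

theorem ContDiffOn.exists_lipschitzWith_norm_le_eqOn_closedBall {E F : Type*}
    [NormedAddCommGroup E] [NormedSpace ℝ E] [ProperSpace E] [NormedAddCommGroup F]
    [NormedSpace ℝ F] {f : E → F} {r : ℝ} (hr : 0 < r) (hf : ContDiffOn ℝ 1 f (closedBall 0 r)) :
    ∃ (g : E → F) (K C : ℝ≥0), LipschitzWith K g ∧ (∀ x, ‖g x‖ ≤ C) ∧
      EqOn g f (closedBall 0 r) := by
  obtain ⟨K, hK⟩ := hf.exists_lipschitzOnWith one_ne_zero (convex_closedBall 0 r)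
    (isCompact_closedBall 0 r)
  obtain ⟨C, hC⟩ := (isCompact_closedBall (0 : E) r).exists_bound_of_continuousOn hf.continuousOn
  have hmaps : MapsTo (ballRetraction r) univ (closedBall (0 : E) r) :=
    fun x _ => ballRetraction_mem_closedBall hr x
  refine ⟨f ∘ ballRetraction r, K * 2, C.toNNReal, ?_, ?_, ?_⟩
  · exact lipschitzOnWith_univ.mp
      (hK.comp (lipschitzWith_ballRetraction hr).lipschitzOnWith hmaps)
  · exact fun x => (hC _ (hmaps (mem_univ x))).trans (Real.le_coe_toNNReal C)
  · intro x hx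
    simp only [Function.comp_apply, ballRetraction_of_mem hr hx]

theorem exists_hasDerivAt_of_lipschitzWith_of_norm_le {E : Type*} [NormedAddCommGroup E]
    [NormedSpace ℝ E] [CompleteSpace E] {g : E → E} {K C : ℝ≥0} (hg : LipschitzWith K g)
    (hC : ∀ x, ‖g x‖ ≤ C) (x₀ : E) (T : ℝ) :
    ∃ γ : ℝ → E, γ 0 = x₀ ∧ ∀ t ∈ Icc 0 T, HasDerivAt γ (g (γ t)) t := by
  set τ : ℝ≥0 := ⟨|T| + 1, by positivity⟩
  -- Since `g` is bounded by `C` everywhere, a ball of radius `C τ` is never left before time `τ`.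
  have hpl : IsPicardLindelof (fun _ => g) (tmin := -τ) (tmax := τ)
      ⟨0, by simp⟩ x₀ (C * τ) 0 C K :=
    { lipschitzOnWith := fun _ _ => hg.lipschitzOnWith
      continuousOn := fun _ _ => continuousOn_const
      norm_le := fun _ _ x _ => hC x
      mul_max_le := by simp }
  obtain ⟨γ, hγ0, hγ⟩ := hpl.exists_eq_forall_mem_Icc_hasDerivWithinAt₀
  have hτ : (τ : ℝ) = |T| + 1 := rfl
  refine ⟨γ, hγ0, fun t ht => (hγ t ⟨?_, ?_⟩).hasDerivAt (Icc_mem_nhds ?_ ?_)⟩ <;>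
    linarith [ht.1, ht.2, le_abs_self T, abs_nonneg T]

lemma ContinuousOn.forall_le_or_exists_first_eq {u : ℝ → ℝ} {a b r : ℝ}
    (hu : ContinuousOn u (Icc a b)) (hua : u a ≤ r) :
    (∀ t ∈ Icc a b, u t ≤ r) ∨ ∃ s ∈ Icc a b, u s = r ∧ ∀ t ∈ Icc a s, u t ≤ r := by
  refine or_iff_not_imp_left.mpr fun hexit => ?_
  push Not at hexit
  obtain ⟨t₁, ht₁, hrt₁⟩ := hexit
  set S := Icc a b ∩ u ⁻¹' Ici r
  have hS : IsClosed S := hu.preimage_isClosed_of_isClosed isClosed_Icc isClosed_Ici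
  have hSbdd : BddBelow S := ⟨a, fun t ht => ht.1.1⟩
  obtain ⟨⟨has, hsb⟩, hrs⟩ : sInf S ∈ S := hS.csInf_mem ⟨t₁, ht₁, hrt₁.le⟩ hSbdd
  have hfirst : ∀ t ∈ Icc a (sInf S), r ≤ u t → t = sInf S := fun t ht hrt =>
    le_antisymm ht.2 (csInf_le hSbdd ⟨⟨ht.1, ht.2.trans hsb⟩, hrt⟩)
  obtain ⟨s, hs, hus⟩ := intermediate_value_Icc has (hu.mono (Icc_subset_Icc_right hsb)) ⟨hua, hrs⟩
  rw [hfirst s hs hus.ge] at hus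
  refine ⟨sInf S, ⟨has, hsb⟩, hus, fun t ht => ?_⟩
  by_contra! hrt
  rw [hfirst t ht hrt.le, hus] at hrt
  exact lt_irrefl r hrt

theorem IsCompact.exists_pos_mul_le_sub_of_chetaev {E : Type*} [TopologicalSpace E] [T2Space E]
    {S : Set E} (hS : IsCompact S) {ρ φ : E → ℝ} (hρ : ContinuousOn ρ S) (hφ : ContinuousOn φ S)
    (hφpos : ∀ x ∈ S, 0 < ρ x → 0 < φ x) {x₀ : E} (hx₀ : x₀ ∈ S) (hρx₀ : 0 < ρ x₀) :
    ∃ c > 0, ∀ (γ : ℝ → E) (T : ℝ), 0 ≤ T → γ 0 = x₀ → (∀ t ∈ Icc 0 T, γ t ∈ S) →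
      (∀ t ∈ Icc 0 T, HasDerivAt (fun s => ρ (γ s)) (φ (γ t)) t) → c * T ≤ ρ (γ T) - ρ x₀ := by
  set K := S ∩ ρ ⁻¹' Ici (ρ x₀ / 2)
  have hK : IsCompact K := hS.of_isClosed_subset
    (hρ.preimage_isClosed_of_isClosed hS.isClosed isClosed_Ici) inter_subset_left
  have hx₀K : x₀ ∈ K := ⟨hx₀, by simp only [mem_preimage, mem_Ici]; linarith⟩
  obtain ⟨z, ⟨hzS, hρz⟩, hzmin⟩ := hK.exists_isMinOn ⟨x₀, hx₀K⟩ (hφ.mono inter_subset_left)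
  refine ⟨φ z, hφpos z hzS (by simp only [mem_preimage, mem_Ici] at hρz; linarith),
    fun γ T hT hγ0 hγS hder => ?_⟩
  have hcont : ContinuousOn (fun s => ρ (γ s)) (Icc 0 T) := fun t ht =>
    (hder t ht).continuousAt.continuousWithinAt
  -- A curve starting in `ρ > 0` cannot cross the level `ρ x₀ / 2`, where `ρ ∘ γ` is increasing.
  have hstay : ∀ t ∈ Icc 0 T, γ t ∈ K := by
    intro t ht
    have hfence := image_le_of_deriv_right_lt_deriv_boundary (B := fun _ => -(ρ x₀ / 2))
      (B' := fun _ => 0) hcont.neg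
      (fun s hs => (hder s (Ico_subset_Icc_self hs)).neg.hasDerivWithinAt)
      (by simp only [Pi.neg_apply, hγ0]; linarith) (fun _ => hasDerivAt_const _ _)
      (fun s hs heq => neg_neg_iff_pos.mpr <| hφpos _ (hγS s (Ico_subset_Icc_self hs))
        (by simp only [Pi.neg_apply, neg_inj] at heq; linarith)) ht
    exact ⟨hγS t ht, by simp only [Pi.neg_apply, neg_le_neg_iff] at hfence; exact hfence⟩
  have hmvt := (convex_Icc 0 T).mul_sub_le_image_sub_of_le_deriv hcont
    (fun t ht => by
      rw [interior_Icc] at ht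
      exact (hder t (Ioo_subset_Icc_self ht)).differentiableAt.differentiableWithinAt)
    (fun t ht => by
      rw [interior_Icc] at ht
      rw [(hder t (Ioo_subset_Icc_self ht)).deriv]
      exact hzmin (hstay t (Ioo_subset_Icc_self ht)))
    0 ⟨le_rfl, hT⟩ T ⟨hT, le_rfl⟩ hT
  simpa only [sub_zero, hγ0] using hmvt

theorem exists_trajectory_reaches_sphere_of_chetaev {E : Type*} [NormedAddCommGroup E]
    [NormedSpace ℝ E] [FiniteDimensional ℝ E] {D : Set E} (hD : IsOpen D) {ρ : E → ℝ} {f : E → E}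
    (hρ : ContDiffOn ℝ 1 ρ D) (hf : ContDiffOn ℝ 1 f D) {r : ℝ} (hr : 0 < r)
    (hB : closedBall 0 r ⊆ D) (hρf : ∀ x ∈ closedBall 0 r, 0 < ρ x → 0 < fderiv ℝ ρ x (f x))
    {x₀ : E} (hx₀ : x₀ ∈ closedBall 0 r) (hρx₀ : 0 < ρ x₀) :
    ∃ (γ : ℝ → E) (T : ℝ), 0 ≤ T ∧ (∀ t, 0 ≤ t → t ≤ T → HasDerivAt γ (f (γ t)) t) ∧
      γ 0 = x₀ ∧ r ≤ ‖γ T‖ := by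
  obtain ⟨g, K, C, hgK, hgC, hgf⟩ := (hf.mono hB).exists_lipschitzWith_norm_le_eqOn_closedBall hr
  obtain ⟨M, hM⟩ := (isCompact_closedBall 0 r).bddAbove_image (hρ.continuousOn.mono hB)
  obtain ⟨c, hc, hgrowth⟩ := (isCompact_closedBall _ r).exists_pos_mul_le_sub_of_chetaev
    (hρ.continuousOn.mono hB)
    (((hρ.continuousOn_fderiv_of_isOpen hD le_rfl).clm_apply hf.continuousOn).mono hB) hρf hx₀ hρx₀
  set T := M / c
  have hT : 0 ≤ T := div_nonneg (hρx₀.le.trans (hM (mem_image_of_mem ρ hx₀))) hc.le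
  obtain ⟨γ, hγ0, hγ⟩ := exists_hasDerivAt_of_lipschitzWith_of_norm_le hgK hgC x₀ T
  have hγf : ∀ t ∈ Icc 0 T, γ t ∈ closedBall 0 r → HasDerivAt γ (f (γ t)) t := fun t ht hγt =>
    hgf hγt ▸ hγ t ht
  have hγcont : ContinuousOn (fun t => ‖γ t‖) (Icc 0 T) := fun t ht =>
    (hγ t ht).continuousAt.norm.continuousWithinAt
  rcases hγcont.forall_le_or_exists_first_eq (r := r) (by simpa [hγ0] using hx₀)
    with hstay | ⟨s, hs, hγs, hbefore⟩
  · have hball : ∀ t ∈ Icc 0 T, γ t ∈ closedBall 0 r := fun t ht =>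
      mem_closedBall_zero_iff.mpr (hstay t ht)
    have hcT := hgrowth γ T hT hγ0 hball fun t ht =>
      ((hρ.contDiffAt (hD.mem_nhds (hB (hball t ht)))).differentiableAt one_ne_zero
        ).hasFDerivAt.comp_hasDerivAt t (hγf t ht (hball t ht))
    have hMT : ρ (γ T) ≤ M := hM (mem_image_of_mem ρ (hball T ⟨hT, le_rfl⟩))
    rw [mul_div_cancel₀ M hc.ne'] at hcT
    linarith
  · refine ⟨γ, s, hs.1, fun t ht0 hts => ?_, hγ0, hγs.ge⟩
    exact hγf t ⟨ht0, hts.trans hs.2⟩ (mem_closedBall_zero_iff.mpr (hbefore t ⟨ht0, hts⟩))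

theorem instability_case1_general {n : ℕ} (D : Set (EuclideanSpace ℝ (Fin n))) (hD : IsOpen D)
    (ρ : EuclideanSpace ℝ (Fin n) → ℝ) (f : EuclideanSpace ℝ (Fin n) → EuclideanSpace ℝ (Fin n))
    (hρ : ContDiffOn ℝ 1 ρ D)
    (hρx0 : ∀ δ > 0, ∃ x₀ : EuclideanSpace ℝ (Fin n), ‖x₀‖ < δ ∧ 0 < ρ x₀)
    (r : ℝ) (hr : 0 < r) (hB : closedBall (0 : EuclideanSpace ℝ (Fin n)) r ⊆ D)
    (hf : ContDiffOn ℝ 1 f D)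
    (hdiv : ∀ x ∈ closedBall (0 : EuclideanSpace ℝ (Fin n)) r, 0 < ρ x →
      ρ x * vdiv f x < vdiv (fun y => ρ y • f y) x) :
    ∃ ε > 0, ∀ δ > 0, ∃ sol : ℝ → EuclideanSpace ℝ (Fin n), ∃ T, 0 ≤ T ∧
      (∀ t, 0 ≤ t → t ≤ T → HasDerivAt sol (f (sol t)) t) ∧
      ‖sol 0‖ < δ ∧ ε ≤ ‖sol T‖ := by
  have hρf : ∀ x ∈ closedBall 0 r, 0 < ρ x → 0 < fderiv ℝ ρ x (f x) := fun x hx hρx =>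
    (lt_vdiv_smul_iff ((hρ.contDiffAt (hD.mem_nhds (hB hx))).differentiableAt one_ne_zero)
      ((hf.contDiffAt (hD.mem_nhds (hB hx))).differentiableAt one_ne_zero)).mp (hdiv x hx hρx)
  refine ⟨r, hr, fun δ hδ => ?_⟩
  obtain ⟨x₀, hx₀δ, hρx₀⟩ := hρx0 (min δ r) (lt_min hδ hr)
  obtain ⟨γ, T, hT, hγ, hγ0, hγT⟩ := exists_trajectory_reaches_sphere_of_chetaev hD hρ hf hr hB hρf
    (mem_closedBall_zero_iff.mpr (hx₀δ.le.trans (min_le_right _ _))) hρx₀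
  exact ⟨γ, T, hT, hγ, hγ0 ▸ hx₀δ.trans_le (min_le_left _ _), hγT⟩

theorem instability_case1 {n : ℕ} (D : Set (EuclideanSpace ℝ (Fin n))) (hD : IsOpen D)
    (h0 : (0 : EuclideanSpace ℝ (Fin n)) ∈ D)
    (ρ : EuclideanSpace ℝ (Fin n) → ℝ) (f : EuclideanSpace ℝ (Fin n) → EuclideanSpace ℝ (Fin n))
    (hρ : ContDiffOn ℝ 1 ρ D) (hρ0 : ρ 0 = 0)
    (hρx0 : ∀ δ > 0, ∃ x₀ : EuclideanSpace ℝ (Fin n), ‖x₀‖ < δ ∧ 0 < ρ x₀)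
    (r : ℝ) (hr : 0 < r) (hB : closedBall (0 : EuclideanSpace ℝ (Fin n)) r ⊆ D)
    (hf : ContDiffOn ℝ 1 f D) (hf0 : f 0 = 0)
    (hdiv : ∀ x ∈ closedBall (0 : EuclideanSpace ℝ (Fin n)) r, 0 < ρ x →
      ρ x * vdiv f x < vdiv (fun y => ρ y • f y) x) :
    ∃ ε > 0, ∀ δ > 0, ∃ sol : ℝ → EuclideanSpace ℝ (Fin n), ∃ T, 0 ≤ T ∧
      (∀ t, 0 ≤ t → t ≤ T → HasDerivAt sol (f (sol t)) t) ∧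
      ‖sol 0‖ < δ ∧ ε ≤ ‖sol T‖ :=
  instability_case1_general D hD ρ f hρ hρx0 r hr hB hf hdiv
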